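/- There exists ν₊ > 0 such that for every ν ∈ (0, ν₊]: (i) there exist unique points u₊ ∈ C_ν⁺ and u₋ ∈ C_ν⁻ with G_ν(u₊) = 0 and G_ν(u₋) = 0, and (ii) there exists λ > 0 such that for all u₁, u₂ ∈ C_ν⁺ (and likewise for all u₁, u₂ ∈ C_ν⁻) one has 2·(G_ν(u₁) − G_ν(u₂))ᵀ Q₂ (u₁ − u₂) ≥ λ·‖u₁ − u₂‖², where Q₂ := diag(−1, 1, −1) — i.e. the strong cone condition with respect to Q₂ holds on C_ν^±, so the born fixed points u_± are hyperbolic. -/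
import Mathlib

set_option maxHeartbeats 1000000


open Set

/-- The vector field in `ℝ³`:
`G_ν(x,y,z) = (x(ν − x²) + x³(y+z) + x(y²+z²) + yz, y + x²(y+z) + x⁴ + yz, −z + x²(y+z) + x⁴ + yz)`. -/
noncomputable def G (ν : ℝ) (p : ℝ × ℝ × ℝ) : ℝ × ℝ × ℝ :=
  (p.1 * (ν - p.1 ^ 2) + p.1 ^ 3 * (p.2.1 + p.2.2) + p.1 * (p.2.1 ^ 2 + p.2.2 ^ 2)
      + p.2.1 * p.2.2,
   p.2.1 + p.1 ^ 2 * (p.2.1 + p.2.2) + p.1 ^ 4 + p.2.1 * p.2.2,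
   -p.2.2 + p.1 ^ 2 * (p.2.1 + p.2.2) + p.1 ^ 4 + p.2.1 * p.2.2)

/-- The box `S_θ = [−√(2θ), √(2θ)] × [−θ^{3/2}, θ^{3/2}] × [−θ^{3/2}, θ^{3/2}]`. -/
noncomputable def S (θ : ℝ) : Set (ℝ × ℝ × ℝ) :=
  Icc (-Real.sqrt (2 * θ)) (Real.sqrt (2 * θ)) ×ˢ
    (Icc (-θ ^ ((3 : ℝ) / 2)) (θ ^ ((3 : ℝ) / 2)) ×ˢ
      Icc (-θ ^ ((3 : ℝ) / 2)) (θ ^ ((3 : ℝ) / 2)))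

/-- The box `C_ν⁺ = [√(ν/2), √(2ν)] × [−ν^{3/2}, ν^{3/2}]²`. -/
noncomputable def Cp (ν : ℝ) : Set (ℝ × ℝ × ℝ) :=
  Icc (Real.sqrt (ν / 2)) (Real.sqrt (2 * ν)) ×ˢ
    (Icc (-ν ^ ((3 : ℝ) / 2)) (ν ^ ((3 : ℝ) / 2)) ×ˢ
      Icc (-ν ^ ((3 : ℝ) / 2)) (ν ^ ((3 : ℝ) / 2)))

/-- The box `C_ν⁻ = [−√(2ν), −√(ν/2)] × [−ν^{3/2}, ν^{3/2}]²`. -/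
noncomputable def Cm (ν : ℝ) : Set (ℝ × ℝ × ℝ) :=
  Icc (-Real.sqrt (2 * ν)) (-Real.sqrt (ν / 2)) ×ˢ
    (Icc (-ν ^ ((3 : ℝ) / 2)) (ν ^ ((3 : ℝ) / 2)) ×ˢ
      Icc (-ν ^ ((3 : ℝ) / 2)) (ν ^ ((3 : ℝ) / 2)))

/-- The quadratic form of `Q₂ = diag(−1, 1, −1)` evaluated on a pair of vectors. -/
noncomputable def Q2form (v w : ℝ × ℝ × ℝ) : ℝ :=
  -(v.1 * w.1) + v.2.1 * w.2.1 - v.2.2 * w.2.2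

private lemma mySq (x y : ℝ) : (x+y)^2 ≤ 2*x^2 + 2*y^2 := by nlinarith [sq_nonneg (x-y)]

private lemma sqmul {X Y P Q : ℝ} (hX : X^2 ≤ P) (hY : Y^2 ≤ Q) (hQ : 0 ≤ Q) :
    (X*Y)^2 ≤ P*Q := by
  calc (X*Y)^2 = X^2*Y^2 := by ring
    _ ≤ P*Q := mul_le_mul hX hY (sq_nonneg Y) (le_trans (sq_nonneg X) hX)

private lemma rpow_facts {r : ℝ} (hr : 0 < r) (hr1 : r ≤ 1) :
    r^8 ≤ r^6 ∧ r^10 ≤ r^6 ∧ r^12 ≤ r^6 := by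
  refine ⟨?_, ?_, ?_⟩ <;>
  · apply pow_le_pow_of_le_one hr.le hr1
    omega

private lemma bs1 {r a w : ℝ} (ha : a^2 ≤ 2*r^2) : (a^3*w)^2 ≤ 8*r^6*w^2 := by
  have ha6 : (a^3)^2 ≤ 8*r^6 := by nlinarith [sq_nonneg a, pow_le_pow_left₀ (sq_nonneg a) ha 3]
  have := sqmul ha6 (le_refl (w^2)) (sq_nonneg w)
  linarith

private lemma bs2 {r a d w u : ℝ} (ha : a^2 ≤ 2*r^2) (hd : d^2 ≤ 2*r^2) (had : r^2/2 ≤ a*d)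
    (hw : w^2 ≤ 4*r^6) (hr : 0 < r) (hr1 : r ≤ 1) :
    ((a^2+a*d+d^2)*(u*w))^2 ≤ 144*r^6*u^2 := by
  have h1 : a^2+a*d+d^2 ≤ 6*r^2 := by linarith [sq_nonneg (a-d)]
  have h0 : 0 ≤ a^2+a*d+d^2 := by nlinarith [sq_nonneg a, sq_nonneg d, sq_nonneg r, had]
  have hq : (a^2+a*d+d^2)^2 ≤ 36*r^4 := by nlinarith [pow_le_pow_left₀ h0 h1 2]
  have h2 : (u*w)^2 ≤ u^2*(4*r^6) := sqmul le_rfl hw (by positivity)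
  have h3 := sqmul hq h2 (by positivity)
  have h4 : r^10 ≤ r^6 := (rpow_facts hr hr1).2.1
  nlinarith [h3, sq_nonneg u, mul_le_mul_of_nonneg_left h4 (sq_nonneg u)]

private lemma bs3 {r a w u : ℝ} (ha : a^2 ≤ 2*r^2) (hw : w^2 ≤ 4*r^6)
    (hr : 0 < r) (hr1 : r ≤ 1) : ((a*w)*u)^2 ≤ 8*r^6*u^2 := by
  have h1 : (a*w)^2 ≤ 2*r^2*(4*r^6) := sqmul ha hw (by positivity)
  have h2 := sqmul h1 (le_refl (u^2)) (sq_nonneg u)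
  have h4 : r^8 ≤ r^6 := (rpow_facts hr hr1).1
  nlinarith [h2, sq_nonneg u, mul_le_mul_of_nonneg_left h4 (sq_nonneg u)]

private lemma bs5 {r e f u : ℝ} (he : e^2 ≤ r^6) (hf : f^2 ≤ r^6)
    (hr : 0 < r) (hr1 : r ≤ 1) : (u*(e^2+f^2))^2 ≤ 4*r^6*u^2 := by
  have h1 : (e^2+f^2)^2 ≤ 4*r^12 := by nlinarith [sq_nonneg e, sq_nonneg f, sq_nonneg (e^2+f^2)]
  have h2 := sqmul (le_refl (u^2)) h1 (by positivity)
  have h4 : r^12 ≤ r^6 := (rpow_facts hr hr1).2.2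
  nlinarith [h2, sq_nonneg u, mul_le_mul_of_nonneg_left h4 (sq_nonneg u)]

private lemma bs6 {r b u : ℝ} (hb : b^2 ≤ r^6) : (b*u)^2 ≤ r^6*u^2 :=
  sqmul hb (le_refl (u^2)) (sq_nonneg u)

private lemma cauchy7 (s1 s2 s3 s4 s5 s6 s7 : ℝ) :
    (s1+s2+s3+s4+s5+s6+s7)^2 ≤ 8*(s1^2+s2^2+s3^2+s4^2+s5^2+s6^2+s7^2) := by
  have h1 := mySq (s1+s2) (s3+s4)
  have h2 := mySq (s5+s6) s7
  have h3 := mySq ((s1+s2)+(s3+s4)) ((s5+s6)+s7)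
  have h4 := mySq s1 s2
  have h5 := mySq s3 s4
  have h6 := mySq s5 s6
  nlinarith [sq_nonneg s7]

private lemma cauchy4 (t1 t2 t3 t4 : ℝ) :
    (t1+t2+t3+t4)^2 ≤ 4*(t1^2+t2^2+t3^2+t4^2) := by
  nlinarith [mySq (t1+t2) (t3+t4), mySq t1 t2, mySq t3 t4]

private lemma combine7 {s1 s2 s3 s4 s5 s6 s7 X Y Z : ℝ}
    (hX : 0 ≤ X) (hY : 0 ≤ Y) (hZ : 0 ≤ Z)
    (h1 : s1^2 ≤ 16*Y + 16*Z) (h2 : s2^2 ≤ 144*X) (h3 : s3^2 ≤ 8*Y)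
    (h4 : s4^2 ≤ 8*Z) (h5 : s5^2 ≤ 4*X) (h6 : s6^2 ≤ Z) (h7 : s7^2 ≤ Y) :
    (s1+s2+s3+s4+s5+s6+s7)^2 ≤ 1200*(X+Y+Z) := by
  have := cauchy7 s1 s2 s3 s4 s5 s6 s7
  linarith

private lemma combine4 {t1 t2 t3 t4 X Y Z : ℝ}
    (hX : 0 ≤ X) (hY : 0 ≤ Y) (hZ : 0 ≤ Z)
    (h1 : t1^2 ≤ 32*X) (h2 : t2^2 ≤ 128*X) (h3 : t3^2 ≤ Z) (h4 : t4^2 ≤ Y) :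
    (t1+t2+t3+t4)^2 ≤ 700*(X+Y+Z) := by
  have := cauchy4 t1 t2 t3 t4
  linarith

private lemma boundA {r a b c d e f : ℝ} (hr : 0 < r) (hr1 : r ≤ 1)
    (ha : a^2 ≤ 2*r^2) (hd : d^2 ≤ 2*r^2) (had : r^2/2 ≤ a*d)
    (hb : b^2 ≤ r^6) (hc : c^2 ≤ r^6) (he : e^2 ≤ r^6) (hf : f^2 ≤ r^6) :
    ((a^3*(b+c) - d^3*(e+f)) + (a*(b^2+c^2) - d*(e^2+f^2)) + (b*c - e*f))^2
      ≤ 1200*(r^6*(a-d)^2 + r^6*(b-e)^2 + r^6*(c-f)^2) := by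
  have hr6 : (0:ℝ) ≤ r^6 := by positivity
  have hef2 : (e+f)^2 ≤ 4*r^6 := by linarith [mySq e f]
  have hbe2 : (b+e)^2 ≤ 4*r^6 := by linarith [mySq b e]
  have hcf2 : (c+f)^2 ≤ 4*r^6 := by linarith [mySq c f]
  have hs1 : (a^3*((b-e)+(c-f)))^2 ≤ 16*(r^6*(b-e)^2) + 16*(r^6*(c-f)^2) := by
    have h1 := bs1 (w := (b-e)+(c-f)) ha
    have h2 := mul_le_mul_of_nonneg_left (mySq (b-e) (c-f))
      (show (0:ℝ) ≤ 8*r^6 by positivity)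
    linarith
  have hs2 : ((a^2+a*d+d^2)*((a-d)*(e+f)))^2 ≤ 144*(r^6*(a-d)^2) := by
    have := bs2 (u := a - d) ha hd had hef2 hr hr1; linarith
  have hs3 : ((a*(b+e))*(b-e))^2 ≤ 8*(r^6*(b-e)^2) := by
    have := bs3 (u := b - e) ha hbe2 hr hr1; linarith
  have hs4 : ((a*(c+f))*(c-f))^2 ≤ 8*(r^6*(c-f)^2) := by
    have := bs3 (u := c - f) ha hcf2 hr hr1; linarith
  have hs5 : ((a-d)*(e^2+f^2))^2 ≤ 4*(r^6*(a-d)^2) := by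
    have := bs5 (u := a - d) he hf hr hr1; linarith
  have hs6 : (b*(c-f))^2 ≤ r^6*(c-f)^2 := by have := bs6 (u := c - f) hb; linarith
  have hs7 : (f*(b-e))^2 ≤ r^6*(b-e)^2 := by have := bs6 (u := b - e) hf; linarith
  have hX : (0:ℝ) ≤ r^6*(a-d)^2 := by positivity
  have hY : (0:ℝ) ≤ r^6*(b-e)^2 := by positivity
  have hZ : (0:ℝ) ≤ r^6*(c-f)^2 := by positivity
  have hdec : (a^3*(b+c) - d^3*(e+f)) + (a*(b^2+c^2) - d*(e^2+f^2)) + (b*c - e*f)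
      = (a^3*((b-e)+(c-f))) + ((a^2+a*d+d^2)*((a-d)*(e+f))) + ((a*(b+e))*(b-e))
        + ((a*(c+f))*(c-f)) + ((a-d)*(e^2+f^2)) + (b*(c-f)) + (f*(b-e)) := by ring
  rw [hdec]
  exact combine7 hX hY hZ hs1 hs2 hs3 hs4 hs5 hs6 hs7

private lemma boundB {r a b c d e f : ℝ} (hr : 0 < r) (hr1 : r ≤ 1)
    (ha : a^2 ≤ 2*r^2) (hd : d^2 ≤ 2*r^2)
    (hb : b^2 ≤ r^6) (hc : c^2 ≤ r^6) (he : e^2 ≤ r^6) (hf : f^2 ≤ r^6) :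
    (((a^2*(b+c) - d^2*(e+f)) + (a^4 - d^4) + (b*c - e*f)) - a^2*((b-e)+(c-f)))^2
      ≤ 700*(r^6*(a-d)^2 + r^6*(b-e)^2 + r^6*(c-f)^2) := by
  have hef2 : (e+f)^2 ≤ 4*r^6 := by linarith [mySq e f]
  have had2 : (a+d)^2 ≤ 8*r^2 := by nlinarith [mySq a d]
  have ht1 : ((a+d)*((a-d)*(e+f)))^2 ≤ 32*(r^6*(a-d)^2) := by
    have h2 : ((a-d)*(e+f))^2 ≤ (a-d)^2*(4*r^6) := sqmul le_rfl hef2 (by positivity)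
    have h3 := sqmul had2 h2 (by positivity)
    have h4 : r^8 ≤ r^6 := (rpow_facts hr hr1).1
    nlinarith [h3, sq_nonneg (a-d), mul_le_mul_of_nonneg_left h4 (sq_nonneg (a-d))]
  have ht2 : (((a^2+d^2)*(a+d))*(a-d))^2 ≤ 128*(r^6*(a-d)^2) := by
    have h1 : (a^2+d^2)^2 ≤ 16*r^4 := by nlinarith [sq_nonneg a, sq_nonneg d, sq_nonneg (a^2+d^2)]
    have h2 : ((a^2+d^2)*(a+d))^2 ≤ 16*r^4*(8*r^2) := sqmul h1 had2 (by positivity)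
    have h3 := sqmul h2 (le_refl ((a-d)^2)) (sq_nonneg (a-d))
    linarith
  have ht3 : (b*(c-f))^2 ≤ r^6*(c-f)^2 := by have := bs6 (u := c - f) hb; linarith
  have ht4 : (f*(b-e))^2 ≤ r^6*(b-e)^2 := by have := bs6 (u := b - e) hf; linarith
  have hX : (0:ℝ) ≤ r^6*(a-d)^2 := by positivity
  have hY : (0:ℝ) ≤ r^6*(b-e)^2 := by positivity
  have hZ : (0:ℝ) ≤ r^6*(c-f)^2 := by positivity
  have hdec : (((a^2*(b+c) - d^2*(e+f)) + (a^4 - d^4) + (b*c - e*f)) - a^2*((b-e)+(c-f)))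
      = ((a+d)*((a-d)*(e+f))) + (((a^2+d^2)*(a+d))*(a-d)) + (b*(c-f)) + (f*(b-e)) := by ring
  rw [hdec]
  exact combine4 hX hY hZ ht1 ht2 ht3 ht4

private lemma assemble {r Dx Dy Dz A B a2 q : ℝ} (hr : 0 < r) (hr1 : r ≤ 1/4000)
    (hq : 3/2*r^2 ≤ q)
    (hA : A^2 ≤ 1200*(r^6*Dx^2 + r^6*Dy^2 + r^6*Dz^2))
    (hB : B^2 ≤ 700*(r^6*Dx^2 + r^6*Dy^2 + r^6*Dz^2))
    (ha20 : 0 ≤ a2) (ha2 : a2 ≤ 2*r^2) :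
    2*((q - r^2)*Dx^2 - A*Dx + Dy^2 + Dz^2 + a2*(Dy^2-Dz^2) + B*(Dy-Dz))
      ≥ (r^2/2)*(Dx^2+Dy^2+Dz^2) := by
  have hr3 : (0:ℝ) < r^3 := by positivity
  have k1 : 2*A*Dx ≤ 1200*(r^3*Dx^2 + r^3*Dy^2 + r^3*Dz^2) + r^3*Dx^2 := by
    nlinarith [sq_nonneg (A - r^3*Dx), hA, hr3]
  have k2 : 2*B*(Dy-Dz) ≥ -(700*(r^3*Dx^2 + r^3*Dy^2 + r^3*Dz^2) + 2*r^3*Dy^2 + 2*r^3*Dz^2) := by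
    nlinarith [sq_nonneg (B + r^3*(Dy-Dz)), hB, hr3,
      mul_nonneg (pow_nonneg hr.le 6) (sq_nonneg (Dy+Dz))]
  have k3 : 2*(q - r^2)*Dx^2 ≥ r^2*Dx^2 := by nlinarith [sq_nonneg Dx, hq]
  have k4 : 2*a2*(Dy^2 - Dz^2) ≥ -4*(r^2*Dz^2) := by
    nlinarith [mul_nonneg ha20 (sq_nonneg Dy), mul_le_mul_of_nonneg_right ha2 (sq_nonneg Dz)]
  have hr32 : r^3 ≤ (1/4000)*r^2 := by nlinarith [mul_nonneg (show (0:ℝ) ≤ 1/4000 - r by linarith) (sq_nonneg r)]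
  have hr22 : r^2 ≤ (1/4000)^2 := by nlinarith [mul_nonneg (show (0:ℝ) ≤ 1/4000 - r by linarith) hr.le]
  have ex : r^3*Dx^2 ≤ (1/4000)*(r^2*Dx^2) := by
    have := mul_le_mul_of_nonneg_right hr32 (sq_nonneg Dx); linarith
  have ey : r^3*Dy^2 ≤ (1/4000)*(r^2*Dy^2) := by
    have := mul_le_mul_of_nonneg_right hr32 (sq_nonneg Dy); linarith
  have ez : r^3*Dz^2 ≤ (1/4000)*(r^2*Dz^2) := by
    have := mul_le_mul_of_nonneg_right hr32 (sq_nonneg Dz); linarith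
  have fy : r^2*Dy^2 ≤ (1/4000)^2*Dy^2 := mul_le_mul_of_nonneg_right hr22 (sq_nonneg Dy)
  have fz : r^2*Dz^2 ≤ (1/4000)^2*Dz^2 := mul_le_mul_of_nonneg_right hr22 (sq_nonneg Dz)
  have gx : (0:ℝ) ≤ r^2*Dx^2 := by positivity
  have gy : (0:ℝ) ≤ Dy^2 := sq_nonneg Dy
  have gz : (0:ℝ) ≤ Dz^2 := sq_nonneg Dz
  linarith

private lemma coneKey {r : ℝ} (hr : 0 < r) (hr1 : r ≤ 1/4000) {a b c d e f : ℝ}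
    (ha : a^2 ≤ 2*r^2) (hd : d^2 ≤ 2*r^2) (had : r^2/2 ≤ a*d)
    (haa : r^2/2 ≤ a^2) (hdd : r^2/2 ≤ d^2)
    (hb : b^2 ≤ r^6) (hc : c^2 ≤ r^6) (he : e^2 ≤ r^6) (hf : f^2 ≤ r^6) :
    2 * Q2form (G (r^2) (a,b,c) - G (r^2) (d,e,f)) ((a,b,c) - (d,e,f))
      ≥ (r^2/2) * ((a-d)^2 + (b-e)^2 + (c-f)^2) := by
  have hr1' : r ≤ 1 := by linarith
  have hq : 3/2*r^2 ≤ a^2+a*d+d^2 := by linarith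
  have hA := boundA hr hr1' ha hd had hb hc he hf
  have hB := boundB hr hr1' ha hd hb hc he hf
  have hval : 2 * Q2form (G (r^2) (a,b,c) - G (r^2) (d,e,f)) ((a,b,c) - (d,e,f))
      = 2*(((a^2+a*d+d^2) - r^2)*(a-d)^2
          - ((a^3*(b+c) - d^3*(e+f)) + (a*(b^2+c^2) - d*(e^2+f^2)) + (b*c - e*f))*(a-d)
          + (b-e)^2 + (c-f)^2 + a^2*((b-e)^2-(c-f)^2)
          + ((((a^2*(b+c) - d^2*(e+f)) + (a^4 - d^4) + (b*c - e*f)) - a^2*((b-e)+(c-f))))*((b-e)-(c-f))) := by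
    simp only [G, Q2form, Prod.mk_sub_mk]
    ring
  rw [hval]
  exact assemble hr hr1 hq hA hB (sq_nonneg a) ha

noncomputable def yfun (x : ℝ) : ℝ := (1 - Real.sqrt (1 + 4*x^4))/2

lemma yfun_cont : Continuous yfun := by
  unfold yfun
  fun_prop

lemma yfun_nonpos (x : ℝ) : yfun x ≤ 0 := by
  unfold yfun
  have h : (1:ℝ) ≤ Real.sqrt (1 + 4*x^4) := by
    have h2 := Real.sqrt_le_sqrt (show (1:ℝ) ≤ 1 + 4*x^4 by nlinarith [sq_nonneg (x^2)])
    rwa [Real.sqrt_one] at h2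
  linarith

lemma yfun_ge (x : ℝ) : -x^4 ≤ yfun x := by
  have h1 : (1 + 4*x^4) ≤ (1 + 2*x^4)^2 := by nlinarith [sq_nonneg (x^4)]
  have h2 := Real.sqrt_le_sqrt h1
  rw [Real.sqrt_sq (by positivity)] at h2
  unfold yfun; linarith

lemma yfun_quad (x : ℝ) : (yfun x)^2 - yfun x = x^4 := by
  have h : Real.sqrt (1 + 4*x^4) ^ 2 = 1 + 4*x^4 := Real.sq_sqrt (by positivity)
  unfold yfun
  linear_combination h/4

lemma rpow32 {ν : ℝ} (h0 : 0 < ν) : ν ^ ((3:ℝ)/2) = Real.sqrt ν ^ 3 := by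
  rw [show ((3:ℝ)/2) = (1/2)*3 by norm_num, Real.rpow_mul h0.le]
  rw [show ((3:ℝ)) = ((3:ℕ):ℝ) by norm_num, Real.rpow_natCast]
  rw [← Real.sqrt_eq_rpow]


noncomputable def ffun (ν x : ℝ) : ℝ := x*(ν - x^2) + 2*x*(yfun x)^2 - (yfun x)^2

lemma ffun_cont (ν : ℝ) : Continuous (ffun ν) := by
  unfold ffun yfun
  fun_prop

lemma Gform (ν x : ℝ) : G ν (x, yfun x, -(yfun x)) = (ffun ν x, 0, 0) := by
  have hq := yfun_quad x
  unfold G ffun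
  refine Prod.ext ?_ (Prod.ext ?_ ?_)
  · simp only; ring
  · simp only; linear_combination -hq
  · simp only; linear_combination -hq

lemma sqrt_le_bound {ν : ℝ} (h0 : 0 < ν) (h1 : ν ≤ 1/16000000) :
    Real.sqrt ν ≤ 1/4000 := by
  have h2 : Real.sqrt ν ^ 2 = ν := Real.sq_sqrt h0.le
  nlinarith [Real.sqrt_nonneg ν]

/-- Existence of a zero in Cp. -/
lemma exZp {ν : ℝ} (h0 : 0 < ν) (h1 : ν ≤ 1/16000000) :
    ∃ u ∈ Cp ν, G ν u = (0,0,0) := by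
  set a := Real.sqrt (ν/2) with ha_def
  set b := Real.sqrt (2*ν) with hb_def
  have ha2 : a^2 = ν/2 := Real.sq_sqrt (by positivity)
  have hb2 : b^2 = 2*ν := Real.sq_sqrt (by positivity)
  have ha0 : 0 < a := Real.sqrt_pos.mpr (by positivity)
  have hb0 : 0 < b := Real.sqrt_pos.mpr (by positivity)
  have hab : a ≤ b := Real.sqrt_le_sqrt (by linarith)
  have hb12 : b ≤ 1/2 := by nlinarith
  have haν : ν ≤ a := by nlinarith
  have hν1 : ν ≤ 1 := by linarith
  have ha3 : a^3 = a*ν/2 := by linear_combination a*ha2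
  have ha4 : a^4 = ν^2/4 := by linear_combination (a^2 + ν/2)*ha2
  have ha8 : a^8 = ν^4/16 := by linear_combination (a^4 + ν^2/4)*ha4
  have hν4 : ν^4 ≤ ν^2 := by nlinarith [sq_nonneg ν, mul_nonneg (mul_nonneg h0.le h0.le) (show (0:ℝ) ≤ 1 - ν^2 by nlinarith)]
  -- f(a) > 0
  have hya := yfun_ge a
  have hya0 := yfun_nonpos a
  have hya2 : (yfun a)^2 ≤ ν^4/16 := by
    nlinarith [mul_nonneg (show (0:ℝ) ≤ a^4 - yfun a by linarith) (show (0:ℝ) ≤ yfun a + a^4 by linarith)]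
  have haν2 : ν^2 ≤ a*ν := by nlinarith
  have hfa : 0 < ffun ν a := by
    unfold ffun
    nlinarith [ha3, haν2, hya2, hν4, mul_nonneg ha0.le (sq_nonneg (yfun a)), pow_pos h0 2]
  -- f(b) < 0
  have hyb0 := yfun_nonpos b
  have hb3 : b^3 = 2*b*ν := by linear_combination b*hb2
  have hfb : ffun ν b < 0 := by
    unfold ffun
    nlinarith [hb3, mul_nonneg (show (0:ℝ) ≤ 1 - 2*b by linarith) (sq_nonneg (yfun b)), mul_pos hb0 h0]
  have hIVT := intermediate_value_Icc' hab (ffun_cont ν).continuousOn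
  obtain ⟨x₀, hx₀, hfx₀⟩ := hIVT ⟨hfb.le, hfa.le⟩
  have hx₀a : a ≤ x₀ := hx₀.1
  have hx₀b : x₀ ≤ b := hx₀.2
  have hx₀0 : 0 < x₀ := lt_of_lt_of_le ha0 hx₀a
  have hx₀2 : x₀^2 ≤ 2*ν := by nlinarith
  have hx₀4 : x₀^4 ≤ 4*ν^2 := by nlinarith
  -- ν^{3/2} bound
  have hE : ν ^ ((3:ℝ)/2) = Real.sqrt ν ^ 3 := rpow32 h0
  have hsν : Real.sqrt ν ^ 2 = ν := Real.sq_sqrt h0.le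
  have hs4 : Real.sqrt ν ≤ 1/4000 := sqrt_le_bound h0 h1
  have hs0 : 0 < Real.sqrt ν := Real.sqrt_pos.mpr h0
  have hEb : 4*ν^2 ≤ ν ^ ((3:ℝ)/2) := by
    rw [hE]; nlinarith
  have hy := yfun_ge x₀
  have hy0 := yfun_nonpos x₀
  have hE0 : 0 ≤ ν ^ ((3:ℝ)/2) := by rw [hE]; positivity
  refine ⟨(x₀, yfun x₀, -(yfun x₀)), ?_, ?_⟩
  · exact ⟨hx₀, ⟨by linarith, by linarith⟩, ⟨by linarith, by linarith⟩⟩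
  · rw [Gform, hfx₀]

/-- Existence of a zero in Cm. -/
lemma exZm {ν : ℝ} (h0 : 0 < ν) (h1 : ν ≤ 1/16000000) :
    ∃ u ∈ Cm ν, G ν u = (0,0,0) := by
  set a := Real.sqrt (ν/2) with ha_def
  set b := Real.sqrt (2*ν) with hb_def
  have ha2 : a^2 = ν/2 := Real.sq_sqrt (by positivity)
  have hb2 : b^2 = 2*ν := Real.sq_sqrt (by positivity)
  have ha0 : 0 < a := Real.sqrt_pos.mpr (by positivity)
  have hb0 : 0 < b := Real.sqrt_pos.mpr (by positivity)
  have hab : a ≤ b := Real.sqrt_le_sqrt (by linarith)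
  have hb12 : b ≤ 1/2 := by nlinarith
  have hbν : ν ≤ b := by nlinarith
  have hν1 : ν ≤ 1 := by linarith
  have hb3 : b^3 = 2*b*ν := by linear_combination b*hb2
  have hb4 : b^4 = 4*ν^2 := by linear_combination (b^2 + 2*ν)*hb2
  have hb8 : b^8 = 16*ν^4 := by linear_combination (b^4 + 4*ν^2)*hb4
  have hν4 : 64*ν^4 ≤ ν^2 := by
    nlinarith [sq_nonneg ν, mul_nonneg (mul_nonneg h0.le h0.le) (show (0:ℝ) ≤ 1 - 64*ν^2 by nlinarith)]
  -- f(-b) > 0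
  have hyb := yfun_ge (-b)
  have hyb0 := yfun_nonpos (-b)
  have hyb2 : (yfun (-b))^2 ≤ 16*ν^4 := by
    nlinarith [mul_nonneg (show (0:ℝ) ≤ b^4 - yfun (-b) by nlinarith) (show (0:ℝ) ≤ yfun (-b) + b^4 by nlinarith)]
  have hbν2 : ν^2 ≤ b*ν := by nlinarith
  have hfb : 0 < ffun ν (-b) := by
    unfold ffun
    nlinarith [hb3, hyb2, hbν2, hν4,
      mul_nonneg (show (0:ℝ) ≤ 1 - 2*b by linarith) (sq_nonneg (yfun (-b)))]
  -- f(-a) < 0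
  have hya0 := yfun_nonpos (-a)
  have ha3 : a^3 = a*ν/2 := by linear_combination a*ha2
  have hfa : ffun ν (-a) < 0 := by
    unfold ffun
    nlinarith [ha3, mul_nonneg ha0.le (sq_nonneg (yfun (-a))), sq_nonneg (yfun (-a)), mul_pos ha0 h0]
  have hIVT := intermediate_value_Icc' (neg_le_neg hab) (ffun_cont ν).continuousOn
  obtain ⟨x₀, hx₀, hfx₀⟩ := hIVT ⟨hfa.le, hfb.le⟩
  have hx₀a : -b ≤ x₀ := hx₀.1
  have hx₀b : x₀ ≤ -a := hx₀.2
  have hx₀2 : x₀^2 ≤ 2*ν := by nlinarith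
  have hx₀4 : x₀^4 ≤ 4*ν^2 := by nlinarith
  have hE : ν ^ ((3:ℝ)/2) = Real.sqrt ν ^ 3 := rpow32 h0
  have hsν : Real.sqrt ν ^ 2 = ν := Real.sq_sqrt h0.le
  have hs4 : Real.sqrt ν ≤ 1/4000 := sqrt_le_bound h0 h1
  have hs0 : 0 < Real.sqrt ν := Real.sqrt_pos.mpr h0
  have hEb : 4*ν^2 ≤ ν ^ ((3:ℝ)/2) := by rw [hE]; nlinarith
  have hy := yfun_ge x₀
  have hy0 := yfun_nonpos x₀
  have hE0 : 0 ≤ ν ^ ((3:ℝ)/2) := by rw [hE]; positivity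
  refine ⟨(x₀, yfun x₀, -(yfun x₀)), ?_, ?_⟩
  · exact ⟨hx₀, ⟨by linarith, by linarith⟩, ⟨by linarith, by linarith⟩⟩
  · rw [Gform, hfx₀]



/-- There exists `ν₊ > 0` such that for every `ν ∈ (0, ν₊]`: (i) `G_ν` has unique zeros
`u₊ ∈ C_ν⁺` and `u₋ ∈ C_ν⁻`, and (ii) there is `λ > 0` such that the strong cone
condition `2 (G_ν u₁ − G_ν u₂)ᵀ Q₂ (u₁ − u₂) ≥ λ ‖u₁ − u₂‖²` holds for all
`u₁, u₂ ∈ C_ν⁺` and for all `u₁, u₂ ∈ C_ν⁻`. -/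
theorem stmt17 :
    ∃ νp : ℝ, 0 < νp ∧ ∀ ν ∈ Ioc (0 : ℝ) νp,
      (∃ up ∈ Cp ν, G ν up = (0, 0, 0) ∧ ∀ u ∈ Cp ν, G ν u = (0, 0, 0) → u = up) ∧
      (∃ um ∈ Cm ν, G ν um = (0, 0, 0) ∧ ∀ u ∈ Cm ν, G ν u = (0, 0, 0) → u = um) ∧
      (∃ lam : ℝ, 0 < lam ∧ ∀ u₁ u₂ : ℝ × ℝ × ℝ,
        ((u₁ ∈ Cp ν ∧ u₂ ∈ Cp ν) ∨ (u₁ ∈ Cm ν ∧ u₂ ∈ Cm ν)) →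
        2 * Q2form (G ν u₁ - G ν u₂) (u₁ - u₂) ≥
          lam * ((u₁.1 - u₂.1) ^ 2 + (u₁.2.1 - u₂.2.1) ^ 2 + (u₁.2.2 - u₂.2.2) ^ 2)) := by
  refine ⟨1/16000000, by norm_num, ?_⟩
  rintro ν ⟨h0, h1⟩
  have hr2 : Real.sqrt ν ^ 2 = ν := Real.sq_sqrt h0.le
  set r := Real.sqrt ν with hrdef
  have hr : 0 < r := Real.sqrt_pos.mpr h0
  have hr1 : r ≤ 1/4000 := sqrt_le_bound h0 h1
  have hE : ν ^ ((3:ℝ)/2) = r^3 := rpow32 h0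
  have hq1 : Real.sqrt (ν/2) ^ 2 = ν/2 := Real.sq_sqrt (by positivity)
  have hq2 : Real.sqrt (2*ν) ^ 2 = 2*ν := Real.sq_sqrt (by positivity)
  have hq0 : 0 ≤ Real.sqrt (ν/2) := Real.sqrt_nonneg _
  -- the cone condition with lam = ν/2
  have cone : ∀ u₁ u₂ : ℝ × ℝ × ℝ, ((u₁ ∈ Cp ν ∧ u₂ ∈ Cp ν) ∨ (u₁ ∈ Cm ν ∧ u₂ ∈ Cm ν)) →
      2 * Q2form (G ν u₁ - G ν u₂) (u₁ - u₂) ≥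
        (ν/2) * ((u₁.1 - u₂.1)^2 + (u₁.2.1 - u₂.2.1)^2 + (u₁.2.2 - u₂.2.2)^2) := by
    rintro ⟨a, b, c⟩ ⟨d, e, f⟩ (⟨hu₁, hu₂⟩ | ⟨hu₁, hu₂⟩)
    · simp only [Cp, Set.mem_prod, Set.mem_Icc] at hu₁ hu₂
      obtain ⟨⟨ha1, ha2⟩, ⟨hb1, hb2⟩, ⟨hc1, hc2⟩⟩ := hu₁
      obtain ⟨⟨hd1, hd2⟩, ⟨he1, he2⟩, ⟨hf1, hf2⟩⟩ := hu₂
      have h0a : (0:ℝ) ≤ a := le_trans hq0 ha1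
      have h0d : (0:ℝ) ≤ d := le_trans hq0 hd1
      have ka : a^2 ≤ 2*r^2 := by linarith [mul_self_le_mul_self h0a ha2]
      have kd : d^2 ≤ 2*r^2 := by linarith [mul_self_le_mul_self h0d hd2]
      have kaa : r^2/2 ≤ a^2 := by linarith [mul_self_le_mul_self hq0 ha1]
      have kdd : r^2/2 ≤ d^2 := by linarith [mul_self_le_mul_self hq0 hd1]
      have kad : r^2/2 ≤ a*d := by linarith [mul_le_mul ha1 hd1 hq0 h0a]
      have kb : b^2 ≤ r^6 := by linarith [mul_nonneg (show (0:ℝ) ≤ r^3 - b by linarith) (show (0:ℝ) ≤ b + r^3 by linarith)]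
      have kc : c^2 ≤ r^6 := by linarith [mul_nonneg (show (0:ℝ) ≤ r^3 - c by linarith) (show (0:ℝ) ≤ c + r^3 by linarith)]
      have ke : e^2 ≤ r^6 := by linarith [mul_nonneg (show (0:ℝ) ≤ r^3 - e by linarith) (show (0:ℝ) ≤ e + r^3 by linarith)]
      have kf : f^2 ≤ r^6 := by linarith [mul_nonneg (show (0:ℝ) ≤ r^3 - f by linarith) (show (0:ℝ) ≤ f + r^3 by linarith)]
      have key := coneKey hr hr1 ka kd kad kaa kdd kb kc ke kf
      rw [hr2] at key
      exact key
    · simp only [Cm, Set.mem_prod, Set.mem_Icc] at hu₁ hu₂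
      obtain ⟨⟨ha1, ha2⟩, ⟨hb1, hb2⟩, ⟨hc1, hc2⟩⟩ := hu₁
      obtain ⟨⟨hd1, hd2⟩, ⟨he1, he2⟩, ⟨hf1, hf2⟩⟩ := hu₂
      have hsa : Real.sqrt (ν/2) ≤ -a := by linarith
      have hsd : Real.sqrt (ν/2) ≤ -d := by linarith
      have h0a : (0:ℝ) ≤ -a := le_trans hq0 hsa
      have h0d : (0:ℝ) ≤ -d := le_trans hq0 hsd
      have ka : a^2 ≤ 2*r^2 := by
        linarith [mul_self_le_mul_self h0a (show -a ≤ Real.sqrt (2*ν) by linarith)]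
      have kd : d^2 ≤ 2*r^2 := by
        linarith [mul_self_le_mul_self h0d (show -d ≤ Real.sqrt (2*ν) by linarith)]
      have kaa : r^2/2 ≤ a^2 := by linarith [mul_self_le_mul_self hq0 hsa]
      have kdd : r^2/2 ≤ d^2 := by linarith [mul_self_le_mul_self hq0 hsd]
      have kad : r^2/2 ≤ a*d := by
        linarith [mul_le_mul hsa hsd hq0 h0a]
      have kb : b^2 ≤ r^6 := by linarith [mul_nonneg (show (0:ℝ) ≤ r^3 - b by linarith) (show (0:ℝ) ≤ b + r^3 by linarith)]
      have kc : c^2 ≤ r^6 := by linarith [mul_nonneg (show (0:ℝ) ≤ r^3 - c by linarith) (show (0:ℝ) ≤ c + r^3 by linarith)]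
      have ke : e^2 ≤ r^6 := by linarith [mul_nonneg (show (0:ℝ) ≤ r^3 - e by linarith) (show (0:ℝ) ≤ e + r^3 by linarith)]
      have kf : f^2 ≤ r^6 := by linarith [mul_nonneg (show (0:ℝ) ≤ r^3 - f by linarith) (show (0:ℝ) ≤ f + r^3 by linarith)]
      have key := coneKey hr hr1 ka kd kad kaa kdd kb kc ke kf
      rw [hr2] at key
      exact key
  obtain ⟨up, hup, hGup⟩ := exZp h0 h1
  obtain ⟨um, hum, hGum⟩ := exZm h0 h1
  have uniq : ∀ u₁ u₂ : ℝ × ℝ × ℝ,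
      ((u₁ ∈ Cp ν ∧ u₂ ∈ Cp ν) ∨ (u₁ ∈ Cm ν ∧ u₂ ∈ Cm ν)) →
      G ν u₁ = (0,0,0) → G ν u₂ = (0,0,0) → u₁ = u₂ := by
    intro u₁ u₂ hmem hg1 hg2
    have hc := cone u₁ u₂ hmem
    rw [hg1, hg2] at hc
    have hz : 2 * Q2form ((0,0,0) - ((0,0,0) : ℝ × ℝ × ℝ)) (u₁ - u₂) = 0 := by
      norm_num [Q2form]
    rw [hz] at hc
    have hS : (u₁.1 - u₂.1)^2 + (u₁.2.1 - u₂.2.1)^2 + (u₁.2.2 - u₂.2.2)^2 ≤ 0 := by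
      nlinarith [hc, sq_nonneg (u₁.1 - u₂.1), sq_nonneg (u₁.2.1 - u₂.2.1),
        sq_nonneg (u₁.2.2 - u₂.2.2)]
    have q1 : (u₁.1 - u₂.1)^2 = 0 := le_antisymm
      (by linarith [sq_nonneg (u₁.2.1 - u₂.2.1), sq_nonneg (u₁.2.2 - u₂.2.2)]) (sq_nonneg _)
    have q2 : (u₁.2.1 - u₂.2.1)^2 = 0 := le_antisymm
      (by linarith [sq_nonneg (u₁.1 - u₂.1), sq_nonneg (u₁.2.2 - u₂.2.2)]) (sq_nonneg _)
    have q3 : (u₁.2.2 - u₂.2.2)^2 = 0 := le_antisymm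
      (by linarith [sq_nonneg (u₁.1 - u₂.1), sq_nonneg (u₁.2.1 - u₂.2.1)]) (sq_nonneg _)
    have h1 : u₁.1 = u₂.1 := by have := sq_eq_zero_iff.mp q1; linarith
    have h2 : u₁.2.1 = u₂.2.1 := by have := sq_eq_zero_iff.mp q2; linarith
    have h3 : u₁.2.2 = u₂.2.2 := by have := sq_eq_zero_iff.mp q3; linarith
    exact Prod.ext h1 (Prod.ext h2 h3)
  refine ⟨⟨up, hup, hGup, fun u hu hGu => uniq u up (Or.inl ⟨hu, hup⟩) hGu hGup⟩,
    ⟨um, hum, hGum, fun u hu hGu => uniq u um (Or.inr ⟨hu, hum⟩) hGu hGum⟩,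
    ⟨ν/2, by positivity, cone⟩⟩
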